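/- Let m ≥ 2, N ≥ 1, let ζ_1, …, ζ_{m−1} ∈ P_N^−, let F(z) be the associated matrix, and let U(z) ∈ PU_1(m,N) be the unique element with F(z)U(z) having all entries in P^+; denote by u_1(z), …, u_m(z) the columns of U(z). Then for every b = (b_1, …, b_m) ∈ ℂ^m, a tuple of polynomials is a solution of the system (S) whose associated vector function u_b(z) satisfies u_b(1) = b if and only if u_b(z) = Σ_{i=1}^m b_i u_i(z) = U(z)b for all z ∈ ℂ \ {0}. -/

import Mathlib

open Matrix Polynomial BigOperators

/-- Evaluation at `z` of the adjoint `p̃(z) = ∑ conj(c_k) z^{-k}` of a polynomial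
`p(z) = ∑ c_k z^k`. -/
noncomputable def adjEval (p : Polynomial ℂ) (z : ℂ) : ℂ :=
  (p.map (starRingEnd ℂ)).eval z⁻¹

/-- A (Laurent-polynomial) function of `z ∈ ℂ \ {0}` belongs to `P⁺`, i.e. it has no
negative-power terms: it agrees with a genuine polynomial away from `0`. -/
def InPPlus (f : ℂ → ℂ) : Prop :=
  ∃ p : Polynomial ℂ, ∀ z : ℂ, z ≠ 0 → f z = p.eval z

/-- Evaluation at `z` of the `m × m` (`m = n + 1`) matrix function `U(z)` whose first `m - 1`
rows have the polynomial entries `u i j` and whose last row has the entries `ũ_{mj}(z)`. -/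
noncomputable def Ueval (n : ℕ) (u : Fin (n + 1) → Fin (n + 1) → Polynomial ℂ) (z : ℂ) :
    Matrix (Fin (n + 1)) (Fin (n + 1)) ℂ :=
  Matrix.of fun i j => if i = Fin.last n then adjEval (u i j) z else (u i j).eval z

/-- Evaluation at `z` of the adjoint `Ũ(z)` of the matrix function `U(z)` above. -/
noncomputable def UadjEval (n : ℕ) (u : Fin (n + 1) → Fin (n + 1) → Polynomial ℂ) (z : ℂ) :
    Matrix (Fin (n + 1)) (Fin (n + 1)) ℂ :=
  Matrix.of fun i j => if j = Fin.last n then (u j i).eval z else adjEval (u j i) z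

/-- `U(z)` (encoded by the polynomials `u i j ∈ P_N^+`) belongs to the class `PU_1(m, N)`,
`m = n + 1`: the first `m - 1` rows of `U(z)` are `(u i j)(z)`, the last row is `ũ_{mj}(z)`,
`Ũ(z)U(z) = I`, `det U(z) = 1`, `U(1) = I`, and `u_{mj}(0) ≠ 0` for at least one `j`. -/
def IsPU1 (n N : ℕ) (u : Fin (n + 1) → Fin (n + 1) → Polynomial ℂ) : Prop :=
  (∀ i j, (u i j).natDegree ≤ N) ∧
  (∀ z : ℂ, z ≠ 0 → UadjEval n u z * Ueval n u z = 1) ∧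
  (∀ z : ℂ, z ≠ 0 → (Ueval n u z).det = 1) ∧
  Ueval n u 1 = 1 ∧
  ∃ j, (u (Fin.last n) j).coeff 0 ≠ 0

/-- Evaluation at `z` of the `m × m` (`m = n + 1`) matrix `F(z)` which is the identity matrix
except that its last row is `(ζ_1(z), …, ζ_{m-1}(z), 1)`, where `ζ_i(z) = (ζ i).eval z⁻¹`. -/
noncomputable def Feval (n : ℕ) (ζ : Fin n → Polynomial ℂ) (z : ℂ) :
    Matrix (Fin (n + 1)) (Fin (n + 1)) ℂ :=
  Matrix.of fun i j =>
    Fin.lastCases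
      (Fin.lastCases (1 : ℂ) (fun j' => (ζ j').eval z⁻¹) j)
      (fun i' => if i'.castSucc = j then (1 : ℂ) else 0) i

/-- The vector function `u(z) = (x_1(z), …, x_{m-1}(z), x̃_m(z))ᵀ` associated with a tuple
`(x_1, …, x_m)`, `m = n + 1`. -/
noncomputable def vecFun (n : ℕ) (x : Fin (n + 1) → Polynomial ℂ) (z : ℂ) :
    Fin (n + 1) → ℂ :=
  fun j => if j = Fin.last n then adjEval (x j) z else (x j).eval z

/-- `(x_1, …, x_m)`, `m = n + 1`, is a solution of the system (S) determined by
`ζ_1, …, ζ_{m-1} ∈ P_N^-`, where `ζ_i(z) = (ζ i).eval z⁻¹`. -/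
def IsSolS (n N : ℕ) (ζ : Fin n → Polynomial ℂ) (x : Fin (n + 1) → Polynomial ℂ) : Prop :=
  (∀ j, (x j).natDegree ≤ N) ∧
  (∀ i : Fin n, InPPlus (fun z =>
    (ζ i).eval z⁻¹ * (x (Fin.last n)).eval z - adjEval (x i.castSucc) z)) ∧
  InPPlus (fun z =>
    (∑ i : Fin n, (ζ i).eval z⁻¹ * (x i.castSucc).eval z) + adjEval (x (Fin.last n)) z)

/- ### Auxiliary lemmas -/

lemma poly_ext {p q : Polynomial ℂ} (h : ∀ z : ℂ, z ≠ 0 → p.eval z = q.eval z) : p = q :=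
  Polynomial.eq_of_infinite_eval_eq _ _
    (((Set.finite_singleton (0:ℂ)).infinite_compl).mono (fun z hz => h z hz))

lemma conj_eval (p : Polynomial ℂ) (x : ℂ) :
    (starRingEnd ℂ) (p.eval x) = (p.map (starRingEnd ℂ)).eval ((starRingEnd ℂ) x) := by
  rw [Polynomial.eval_map, Polynomial.eval₂_at_apply]

lemma map_conj_conj (p : Polynomial ℂ) :
    (p.map (starRingEnd ℂ)).map (starRingEnd ℂ) = p := by
  rw [Polynomial.map_map]
  convert Polynomial.map_id
  ext z; simp

lemma poly_const {p s : Polynomial ℂ} (h : ∀ w : ℂ, w ≠ 0 → p.eval w = s.eval w⁻¹) :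
    p = Polynomial.C (p.coeff 0) := by
  set d := s.natDegree with hd
  set t : Polynomial ℂ := ∑ k ∈ Finset.range (d + 1), Polynomial.C (s.coeff k) * X ^ (d - k)
    with ht
  have key : X ^ d * p = t := by
    apply poly_ext
    intro w hw
    have hs : s.eval w⁻¹ = ∑ k ∈ Finset.range (d + 1), s.coeff k * (w⁻¹) ^ k :=
      Polynomial.eval_eq_sum_range (p := s) w⁻¹
    simp only [Polynomial.eval_mul, Polynomial.eval_pow, Polynomial.eval_X, h w hw, hs, ht,
      Polynomial.eval_finset_sum, Polynomial.eval_mul, Polynomial.eval_C, Polynomial.eval_pow,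
      Polynomial.eval_X, Finset.mul_sum]
    apply Finset.sum_congr rfl
    intro k hk
    have hk' : k ≤ d := Nat.lt_succ_iff.mp (Finset.mem_range.mp hk)
    rw [pow_sub₀ w hw hk']
    field_simp
    ring_nf
    rw [mul_assoc, ← mul_pow, mul_inv_cancel₀ hw, one_pow, mul_one]
  rcases eq_or_ne p 0 with h0 | h0
  · simp [h0]
  · have h1 : (X ^ d * p).natDegree = d + p.natDegree := by
      rw [Polynomial.natDegree_mul (pow_ne_zero _ Polynomial.X_ne_zero) h0]
      simp
    have h2 : t.natDegree ≤ d := by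
      apply Polynomial.natDegree_sum_le_of_forall_le
      intro k hk
      calc (Polynomial.C (s.coeff k) * X ^ (d - k)).natDegree ≤ (d - k) := by
            apply le_trans (Polynomial.natDegree_C_mul_le _ _)
            simp
        _ ≤ d := Nat.sub_le _ _
    have h3 : d + p.natDegree ≤ d := by rw [← h1, key]; exact h2
    have hdeg : p.natDegree = 0 := by omega
    exact Polynomial.eq_C_of_natDegree_eq_zero hdeg

section EntryLemmas

variable {n : ℕ} (ζ : Fin n → Polynomial ℂ) (u : Fin (n + 1) → Fin (n + 1) → Polynomial ℂ)
  (z : ℂ)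

lemma Feval_castSucc (i' : Fin n) (j : Fin (n + 1)) :
    Feval n ζ z i'.castSucc j = if i'.castSucc = j then 1 else 0 := by
  simp [Feval]

lemma Feval_last_castSucc (j' : Fin n) :
    Feval n ζ z (Fin.last n) j'.castSucc = (ζ j').eval z⁻¹ := by
  simp [Feval]

lemma Feval_last_last : Feval n ζ z (Fin.last n) (Fin.last n) = 1 := by
  simp [Feval]

lemma Feval_mulVec_castSucc (v : Fin (n + 1) → ℂ) (i' : Fin n) :
    (Feval n ζ z *ᵥ v) i'.castSucc = v i'.castSucc := by
  simp [Matrix.mulVec, dotProduct, Feval_castSucc, ite_mul]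

lemma Feval_mulVec_last (v : Fin (n + 1) → ℂ) :
    (Feval n ζ z *ᵥ v) (Fin.last n) =
      (∑ i : Fin n, (ζ i).eval z⁻¹ * v i.castSucc) + v (Fin.last n) := by
  simp [Matrix.mulVec, dotProduct, Fin.sum_univ_castSucc, Feval_last_castSucc, Feval_last_last]

lemma Feval_det : (Feval n ζ z).det = 1 := by
  rw [Matrix.det_of_lowerTriangular]
  · apply Finset.prod_eq_one
    intro i _
    refine Fin.lastCases ?_ (fun i' => ?_) i
    · exact Feval_last_last ζ z
    · simp [Feval_castSucc]
  · intro i j hij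
    have hij' : i < j := hij
    refine Fin.lastCases (fun hij' => ?_) (fun i' hij' => ?_) i hij'
    · exact absurd hij' (not_lt.mpr (Fin.le_last j))
    · rw [Feval_castSucc, if_neg (fun h => absurd (h ▸ hij') (lt_irrefl _))]

lemma Ueval_castSucc (i' : Fin n) (j : Fin (n + 1)) :
    Ueval n u z i'.castSucc j = (u i'.castSucc j).eval z := by
  simp [Ueval, (Fin.castSucc_lt_last i').ne]

lemma Ueval_last (j : Fin (n + 1)) :
    Ueval n u z (Fin.last n) j = adjEval (u (Fin.last n) j) z := by
  simp [Ueval]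

lemma UadjEval_castSucc (i : Fin (n + 1)) (j' : Fin n) :
    UadjEval n u z i j'.castSucc = adjEval (u j'.castSucc i) z := by
  simp [UadjEval, (Fin.castSucc_lt_last j').ne]

lemma UadjEval_last (i : Fin (n + 1)) :
    UadjEval n u z i (Fin.last n) = (u (Fin.last n) i).eval z := by
  simp [UadjEval]

lemma FU_last (k : Fin (n + 1)) :
    (Feval n ζ z * Ueval n u z) (Fin.last n) k =
      (∑ i : Fin n, (ζ i).eval z⁻¹ * (u i.castSucc k).eval z) +
        adjEval (u (Fin.last n) k) z := by
  rw [Matrix.mul_apply, Fin.sum_univ_castSucc]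
  simp [Feval_last_castSucc, Feval_last_last, Ueval_castSucc, Ueval_last]

lemma adjEval_sum {ι : Type*} (s : Finset ι) (c : ι → ℂ) (p : ι → Polynomial ℂ) :
    adjEval (∑ k ∈ s, Polynomial.C (c k) * p k) z =
      ∑ k ∈ s, (starRingEnd ℂ) (c k) * adjEval (p k) z := by
  simp [adjEval, Polynomial.map_sum, Polynomial.eval_finset_sum]

end EntryLemmas

theorem stmt_16 {n N : ℕ} (hn : 1 ≤ n) (hN : 1 ≤ N)
    (ζ : Fin n → Polynomial ℂ)
    (hζ : ∀ i, (ζ i).natDegree ≤ N ∧ (ζ i).coeff 0 = 0)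
    (u : Fin (n + 1) → Fin (n + 1) → Polynomial ℂ) (hu : IsPU1 n N u)
    (hFU : ∀ a b, InPPlus (fun z => (Feval n ζ z * Ueval n u z) a b)) :
    ∀ (b : Fin (n + 1) → ℂ) (x : Fin (n + 1) → Polynomial ℂ),
      (IsSolS n N ζ x ∧ vecFun n x 1 = b) ↔
        (∀ z : ℂ, z ≠ 0 → vecFun n x z = Ueval n u z *ᵥ b) := by
  obtain ⟨hudeg, huUnit, hudet, huOne, -⟩ := hu
  have hUadj1 : UadjEval n u 1 = 1 := by
    have h := huUnit 1 one_ne_zero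
    rwa [huOne, mul_one] at h
  set L := Fin.last n with hL
  -- the matrix G of polynomials representing F(z)U(z)
  set g : Fin (n + 1) → Fin (n + 1) → Polynomial ℂ := fun a c => (hFU a c).choose with hgdef
  have hg : ∀ a c, ∀ z : ℂ, z ≠ 0 → (Feval n ζ z * Ueval n u z) a c = (g a c).eval z :=
    fun a c => (hFU a c).choose_spec
  set G : Matrix (Fin (n + 1)) (Fin (n + 1)) (Polynomial ℂ) := Matrix.of g with hG
  have hGmap : ∀ z : ℂ, z ≠ 0 →
      G.map (Polynomial.eval z) = Feval n ζ z * Ueval n u z := by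
    intro z hz
    ext a c
    exact (hg a c z hz).symm
  have hmapdet : ∀ z : ℂ, (G.map (Polynomial.eval z)).det = Polynomial.eval z G.det := by
    intro z
    have h := RingHom.map_det (Polynomial.evalRingHom z) G
    simpa [RingHom.mapMatrix_apply, Polynomial.coe_evalRingHom] using h.symm
  have hmapadj : ∀ z : ℂ,
      (G.map (Polynomial.eval z)).adjugate = G.adjugate.map (Polynomial.eval z) := by
    intro z
    have h := RingHom.map_adjugate (Polynomial.evalRingHom z) G
    simpa [RingHom.mapMatrix_apply, Polynomial.coe_evalRingHom] using h.symm
  have hdetG : G.det = 1 := by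
    apply poly_ext
    intro z hz
    rw [← hmapdet z, hGmap z hz, Matrix.det_mul, Feval_det, hudet z hz, one_mul]
    simp
  have hadjmul : ∀ z : ℂ, z ≠ 0 →
      G.adjugate.map (Polynomial.eval z) * Feval n ζ z = UadjEval n u z := by
    intro z hz
    have hUU : Ueval n u z * UadjEval n u z = 1 := mul_eq_one_comm.mp (huUnit z hz)
    have h2 : G.adjugate.map (Polynomial.eval z) * G.map (Polynomial.eval z) = 1 := by
      rw [← hmapadj z, Matrix.adjugate_mul, hmapdet z, hdetG]
      simp
    calc G.adjugate.map (Polynomial.eval z) * Feval n ζ z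
        = G.adjugate.map (Polynomial.eval z) * Feval n ζ z *
            (Ueval n u z * UadjEval n u z) := by rw [hUU, mul_one]
      _ = (G.adjugate.map (Polynomial.eval z) * (Feval n ζ z * Ueval n u z)) *
            UadjEval n u z := by simp only [mul_assoc]
      _ = (G.adjugate.map (Polynomial.eval z) * G.map (Polynomial.eval z)) *
            UadjEval n u z := by rw [hGmap z hz]
      _ = UadjEval n u z := by rw [h2, one_mul]
  have hUadj_eq : ∀ z : ℂ, z ≠ 0 → ∀ (k : Fin (n + 1)) (i : Fin n),
      (ζ i).eval z⁻¹ * (u L k).eval z - adjEval (u i.castSucc k) z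
        = -((G.adjugate k i.castSucc).eval z) := by
    intro z hz k i
    have h := hadjmul z hz
    have hlastcol : (u L k).eval z = (G.adjugate k L).eval z := by
      rw [← UadjEval_last u z k, ← h, Matrix.mul_apply, Fin.sum_univ_castSucc]
      simp [Feval_castSucc, Feval_last_last, (Fin.castSucc_lt_last _).ne, hL]
    have hcol : adjEval (u i.castSucc k) z
        = (G.adjugate k i.castSucc).eval z + (G.adjugate k L).eval z * (ζ i).eval z⁻¹ := by
      rw [← UadjEval_castSucc u z k i, ← h, Matrix.mul_apply, Fin.sum_univ_castSucc]
      have hF : ∀ j' : Fin n, Feval n ζ z j'.castSucc i.castSucc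
          = if j' = i then 1 else 0 := by
        intro j'
        rw [Feval_castSucc]
        simp [Fin.castSucc_inj]
      simp [hF, Feval_last_castSucc, hL]
    rw [hlastcol, hcol]
    ring
  intro b x
  have hvc : ∀ (z : ℂ) (i' : Fin n), vecFun n x z i'.castSucc = (x i'.castSucc).eval z :=
    fun z i' => if_neg (Fin.castSucc_lt_last i').ne
  have hvl : ∀ z : ℂ, vecFun n x z L = adjEval (x L) z := fun z => if_pos rfl
  constructor
  · -- forward direction
    rintro ⟨⟨hdeg, hc1, hc2⟩, hb⟩
    choose p hp using hc1
    obtain ⟨pl, hpl⟩ := hc2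
    set w : Fin (n + 1) → Polynomial ℂ := Fin.lastCases pl (fun i' => x i'.castSucc) with hw
    have hwc : ∀ i' : Fin n, w i'.castSucc = x i'.castSucc := fun i' => by
      simp [hw]
    have hwl : w L = pl := by
      show Fin.lastCases pl (fun i' => x i'.castSucc) (Fin.last n) = pl
      exact Fin.lastCases_last
    have hFv : ∀ z : ℂ, z ≠ 0 → ∀ j, (Feval n ζ z *ᵥ vecFun n x z) j = (w j).eval z := by
      intro z hz j
      refine Fin.lastCases ?_ (fun i' => ?_) j
      · rw [Feval_mulVec_last, hwl, ← hpl z hz]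
        simp only [hvc, hvl, hL]
        rw [add_right_inj]; exact hvl z
      · rw [Feval_mulVec_castSucc, hwc, hvc]
    set q : Fin (n + 1) → Polynomial ℂ := fun k => ∑ j, G.adjugate k j * w j with hqdef
    have hq : ∀ z : ℂ, z ≠ 0 → ∀ k, (UadjEval n u z *ᵥ vecFun n x z) k = (q k).eval z := by
      intro z hz k
      rw [← hadjmul z hz, ← Matrix.mulVec_mulVec]
      have hFv' : Feval n ζ z *ᵥ vecFun n x z = fun j => (w j).eval z :=
        funext (hFv z hz)
      rw [hFv']
      simp [Matrix.mulVec, dotProduct, hqdef, Polynomial.eval_finset_sum]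
    set s : Fin (n + 1) → Polynomial ℂ :=
      fun k => x L * g L k - ∑ i : Fin n, u i.castSucc k * p i with hsdef
    have hqs : ∀ k, ∀ wv : ℂ, wv ≠ 0 → ((q k).map (starRingEnd ℂ)).eval wv
        = (s k).eval wv⁻¹ := by
      intro k wv hwv
      set z : ℂ := wv⁻¹ with hzdef
      have hz : z ≠ 0 := inv_ne_zero hwv
      set z' : ℂ := ((starRingEnd ℂ) z)⁻¹ with hz'def
      have hz' : z' ≠ 0 := by
        simp [hz'def, hz]
      have hconjz' : (starRingEnd ℂ) z' = wv := by
        rw [hz'def, map_inv₀, Complex.conj_conj, hzdef, inv_inv]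
      have hinvz' : z'⁻¹ = (starRingEnd ℂ) z := by rw [hz'def, inv_inv]
      have key1 : ∀ P : Polynomial ℂ, (starRingEnd ℂ) (adjEval P z') = P.eval z := by
        intro P
        rw [adjEval, conj_eval, map_conj_conj, hinvz', Complex.conj_conj]
      have key2 : ∀ P : Polynomial ℂ, (starRingEnd ℂ) (P.eval z') = adjEval P z := by
        intro P
        rw [conj_eval, adjEval, hconjz', hzdef, inv_inv]
      have h1 : (q k).eval z' = (UadjEval n u z' *ᵥ vecFun n x z') k := (hq z' hz' k).symm
      have h2 : ((q k).map (starRingEnd ℂ)).eval wv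
          = (starRingEnd ℂ) ((UadjEval n u z' *ᵥ vecFun n x z') k) := by
        rw [← h1, ← hconjz', ← conj_eval]
      rw [h2]
      have h3 : (UadjEval n u z' *ᵥ vecFun n x z') k
          = (∑ i : Fin n, adjEval (u i.castSucc k) z' * (x i.castSucc).eval z')
            + (u L k).eval z' * adjEval (x L) z' := by
        rw [Matrix.mulVec, dotProduct, Fin.sum_univ_castSucc]
        congr 1
        · exact Finset.sum_congr rfl (fun i _ => by rw [UadjEval_castSucc, hvc])
        · rw [UadjEval_last, hvl]
      rw [h3, map_add, map_sum, _root_.map_mul, key2, key1]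
      have h4 : ∀ i : Fin n,
          (starRingEnd ℂ) (adjEval (u i.castSucc k) z' * (x i.castSucc).eval z')
            = (u i.castSucc k).eval z * adjEval (x i.castSucc) z := by
        intro i
        rw [_root_.map_mul, key1, key2]
      rw [Finset.sum_congr rfl (fun i _ => h4 i)]
      have h5 : ∀ i : Fin n, adjEval (x i.castSucc) z
          = (ζ i).eval z⁻¹ * (x L).eval z - (p i).eval z := by
        intro i
        have hh := hp i z hz
        simp only [← hL] at hh
        linear_combination -hh
      have hgk : (∑ i : Fin n, (ζ i).eval z⁻¹ * (u i.castSucc k).eval z)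
          + adjEval (u L k) z = (g L k).eval z := by
        rw [← FU_last, hg L k z hz]
      have hsum1 : ∑ i : Fin n, (u i.castSucc k).eval z *
            ((ζ i).eval z⁻¹ * (x L).eval z - (p i).eval z)
          = (x L).eval z * (∑ i : Fin n, (ζ i).eval z⁻¹ * (u i.castSucc k).eval z)
            - ∑ i : Fin n, ((u i.castSucc k) * (p i)).eval z := by
        rw [Finset.mul_sum, ← Finset.sum_sub_distrib]
        exact Finset.sum_congr rfl (fun i _ => by rw [Polynomial.eval_mul]; ring)
      rw [Finset.sum_congr rfl (fun i _ => by rw [h5 i]), hsum1]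
      rw [hsdef]
      simp only [Polynomial.eval_sub, Polynomial.eval_mul, Polynomial.eval_finset_sum]
      rw [← hgk]
      ring
    have hqconst : ∀ k, q k = Polynomial.C (b k) := by
      intro k
      have h1 : (q k).map (starRingEnd ℂ)
          = Polynomial.C (((q k).map (starRingEnd ℂ)).coeff 0) := poly_const (hqs k)
      have h2 : q k = Polynomial.C ((starRingEnd ℂ) (((q k).map (starRingEnd ℂ)).coeff 0)) := by
        calc q k = ((q k).map (starRingEnd ℂ)).map (starRingEnd ℂ) := (map_conj_conj _).symm
          _ = (Polynomial.C (((q k).map (starRingEnd ℂ)).coeff 0)).map (starRingEnd ℂ) := by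
              conv_lhs => rw [h1]
          _ = _ := Polynomial.map_C _
      have h3 : (q k).eval 1 = b k := by
        rw [← hq 1 one_ne_zero k, hUadj1, Matrix.one_mulVec, hb]
      rw [h2, Polynomial.eval_C] at h3
      rw [h2, h3]
    intro z hz
    have h1 : UadjEval n u z *ᵥ vecFun n x z = b := by
      funext k
      rw [hq z hz k, hqconst k, Polynomial.eval_C]
    have hUU : Ueval n u z * UadjEval n u z = 1 := mul_eq_one_comm.mp (huUnit z hz)
    calc vecFun n x z = (Ueval n u z * UadjEval n u z) *ᵥ vecFun n x z := by
          rw [hUU, Matrix.one_mulVec]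
      _ = Ueval n u z *ᵥ (UadjEval n u z *ᵥ vecFun n x z) := by rw [← Matrix.mulVec_mulVec]
      _ = Ueval n u z *ᵥ b := by rw [h1]
  · -- backward direction
    intro h
    have hxc : ∀ i' : Fin n, x i'.castSucc = ∑ k, Polynomial.C (b k) * u i'.castSucc k := by
      intro i'
      apply poly_ext
      intro z hz
      have h1 := congrFun (h z hz) i'.castSucc
      rw [hvc] at h1
      rw [h1, Matrix.mulVec, dotProduct, Polynomial.eval_finset_sum]
      refine Finset.sum_congr rfl (fun k _ => ?_)
      rw [Ueval_castSucc, Polynomial.eval_mul, Polynomial.eval_C]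
      ring
    have hxl : x L = ∑ k, Polynomial.C ((starRingEnd ℂ) (b k)) * u L k := by
      have h2 : (x L).map (starRingEnd ℂ)
          = ∑ k, Polynomial.C (b k) * (u L k).map (starRingEnd ℂ) := by
        apply poly_ext
        intro wv hwv
        have h1 := congrFun (h wv⁻¹ (inv_ne_zero hwv)) L
        rw [hvl, adjEval, inv_inv] at h1
        rw [h1, Matrix.mulVec, dotProduct, Polynomial.eval_finset_sum]
        refine Finset.sum_congr rfl (fun k _ => ?_)
        rw [Ueval_last, adjEval, inv_inv, Polynomial.eval_mul, Polynomial.eval_C]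
        ring
      calc x L = ((x L).map (starRingEnd ℂ)).map (starRingEnd ℂ) := (map_conj_conj _).symm
        _ = (∑ k, Polynomial.C (b k) * (u L k).map (starRingEnd ℂ)).map (starRingEnd ℂ) := by
            rw [h2]
        _ = ∑ k, Polynomial.C ((starRingEnd ℂ) (b k)) * u L k := by
            rw [Polynomial.map_sum]
            refine Finset.sum_congr rfl (fun k _ => ?_)
            rw [Polynomial.map_mul, Polynomial.map_C, map_conj_conj]
    refine ⟨⟨?_, ?_, ?_⟩, ?_⟩
    · -- degree bounds
      intro j
      refine Fin.lastCases ?_ (fun i' => ?_) j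
      · rw [← hL, hxl]
        refine Polynomial.natDegree_sum_le_of_forall_le _ _ (fun k _ => ?_)
        exact le_trans (Polynomial.natDegree_C_mul_le _ _) (hudeg _ _)
      · rw [hxc]
        refine Polynomial.natDegree_sum_le_of_forall_le _ _ (fun k _ => ?_)
        exact le_trans (Polynomial.natDegree_C_mul_le _ _) (hudeg _ _)
    · -- first family of conditions
      intro i
      refine ⟨∑ k, Polynomial.C (-(starRingEnd ℂ) (b k)) * G.adjugate k i.castSucc, ?_⟩
      intro z hz
      show (ζ i).eval z⁻¹ * (x (Fin.last n)).eval z - adjEval (x i.castSucc) z = _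
      simp only [← hL]
      rw [hxl, hxc i, Polynomial.eval_finset_sum, adjEval_sum, Polynomial.eval_finset_sum,
        Finset.mul_sum, ← Finset.sum_sub_distrib]
      refine Finset.sum_congr rfl (fun k _ => ?_)
      have hkey := hUadj_eq z hz k i
      simp only [Polynomial.eval_mul, Polynomial.eval_C]
      linear_combination ((starRingEnd ℂ) (b k)) * hkey
    · -- last condition
      refine ⟨∑ k, Polynomial.C (b k) * g L k, ?_⟩
      intro z hz
      show (∑ i : Fin n, (ζ i).eval z⁻¹ * (x i.castSucc).eval z)
          + adjEval (x (Fin.last n)) z = _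
      simp only [← hL]
      rw [hxl, adjEval_sum]
      have hxe : ∀ i : Fin n, (x i.castSucc).eval z = ∑ k, b k * (u i.castSucc k).eval z := by
        intro i
        rw [hxc i, Polynomial.eval_finset_sum]
        exact Finset.sum_congr rfl (fun k _ => by
          rw [Polynomial.eval_mul, Polynomial.eval_C])
      have hstep : ∀ i : Fin n, (ζ i).eval z⁻¹ * (x i.castSucc).eval z
          = ∑ k, b k * ((ζ i).eval z⁻¹ * (u i.castSucc k).eval z) := by
        intro i
        rw [hxe i, Finset.mul_sum]
        exact Finset.sum_congr rfl (fun k _ => by ring)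
      rw [Finset.sum_congr rfl (fun i _ => hstep i), Finset.sum_comm,
        Polynomial.eval_finset_sum]
      have hconj : ∀ k : Fin (n + 1),
          (starRingEnd ℂ) ((starRingEnd ℂ) (b k)) * adjEval (u L k) z
            = b k * adjEval (u L k) z := by
        intro k
        rw [Complex.conj_conj]
      rw [Finset.sum_congr rfl (fun k _ => hconj k), ← Finset.sum_add_distrib]
      refine Finset.sum_congr rfl (fun k _ => ?_)
      have hgk : (∑ i : Fin n, (ζ i).eval z⁻¹ * (u i.castSucc k).eval z)
          + adjEval (u L k) z = (g L k).eval z := by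
        rw [← FU_last, hg L k z hz]
      rw [Polynomial.eval_mul, Polynomial.eval_C, ← hgk, mul_add, Finset.mul_sum]
    · -- value at 1
      rw [h 1 one_ne_zero, huOne, Matrix.one_mulVec]
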